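/- For an ideal I of C(X) where X is a P-space, the following are equivalent: (a) I is countable strongly annihilated; (b) Z[I] is closed under countable intersection; (c) I satisfies the countable strong annihilator condition (for every countable S ⊆ I there exists f ∈ I with Ann(S) = Ann(f)). -/

import Mathlib

/-!
Write `Z(S)` for the common zero set of `S ⊆ C(X)`. Then `c` annihilates `S` exactly when the
cozero set of `c` lies in `Z(S)`, and in a completely regular space an open set `U` is recovered
from the functions with cozero set inside `U`. In a P-space a countable intersection of zero sets
is again a zero set, hence open, so for countable `S` the annihilator of `S` and the set `Z(S)`
determine each other; moreover `Z(g) ⊆ Z(b)` forces `g ∣ b`. Each of the three conditions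
therefore says that `Z(S) = Z(g)` for some `g ∈ I`.
-/

open ContinuousMap

/-- An ideal `I` is countable strongly annihilated if for each countable subset `S ⊆ I`
and each `b ∉ I` there exists `c` with `c * a = 0` for all `a ∈ S` but `c * b ≠ 0`. -/
def CountableStronglyAnnihilated {R : Type*} [CommRing R] (I : Ideal R) : Prop :=
  ∀ S : Set R, S.Countable → S ⊆ I → ∀ b ∉ I, ∃ c : R, (∀ a ∈ S, c * a = 0) ∧ c * b ≠ 0

open Function Set

section Annihilator

variable {X R : Type*} [TopologicalSpace X] [TopologicalSpace R] [MulZeroClass R]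
  [NoZeroDivisors R] [ContinuousMul R]

theorem ContinuousMap.mul_eq_zero_iff_support_subset (c a : C(X, R)) :
    c * a = 0 ↔ support c ⊆ {x | a x = 0} := by
  simp only [ContinuousMap.ext_iff, mul_apply, zero_apply, mul_eq_zero, subset_def,
    mem_support]
  exact forall_congr' fun _ => or_iff_not_imp_left

theorem ContinuousMap.setOf_mul_eq_zero (a : C(X, R)) :
    {c : C(X, R) | c * a = 0} = {c : C(X, R) | support c ⊆ {x | a x = 0}} :=
  Set.ext fun c => mul_eq_zero_iff_support_subset c a

theorem ContinuousMap.setOf_forall_mul_eq_zero (S : Set C(X, R)) :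
    {c : C(X, R) | ∀ s ∈ S, c * s = 0} = {c : C(X, R) | support c ⊆ ⋂ s ∈ S, {x | s x = 0}} := by
  ext c
  simp only [mem_ofPred, subset_iInter₂_iff, mul_eq_zero_iff_support_subset]

end Annihilator

section CompletelyRegular

variable {X : Type*} [TopologicalSpace X] [CompletelyRegularSpace X]

theorem exists_continuousMap_support_subset {U : Set X} (hU : IsOpen U) {x : X} (hx : x ∈ U) :
    ∃ c : C(X, ℝ), c x ≠ 0 ∧ support c ⊆ U := by
  obtain ⟨f, hf, hfx, hfU⟩ := CompletelyRegularSpace.completely_regular_isOpen x U hU hx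
  refine ⟨⟨fun y => 1 - f y, by fun_prop⟩, by simp [hfx], fun y hy => ?_⟩
  by_contra hyU
  exact hy (by simp [hfU hyU])

theorem setOf_support_subset_subset_iff {U : Set X} (hU : IsOpen U) (V : Set X) :
    {c : C(X, ℝ) | support c ⊆ U} ⊆ {c : C(X, ℝ) | support c ⊆ V} ↔ U ⊆ V := by
  refine ⟨fun h x hx => ?_, fun h c hc => hc.trans h⟩
  obtain ⟨c, hcx, hcU⟩ := exists_continuousMap_support_subset hU hx
  exact h hcU hcx

theorem setOf_support_subset_inj {U V : Set X} (hU : IsOpen U) (hV : IsOpen V) :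
    {c : C(X, ℝ) | support c ⊆ U} = {c : C(X, ℝ) | support c ⊆ V} ↔ U = V :=
  ⟨fun h => (setOf_support_subset_subset_iff hU V).1 h.subset |>.antisymm
    ((setOf_support_subset_subset_iff hV U).1 h.symm.subset), fun h => h ▸ rfl⟩

end CompletelyRegular

section ZeroSets

variable {X : Type*} [TopologicalSpace X]

theorem ContinuousMap.exists_zeroSet_eq_iInter (f : ℕ → C(X, ℝ)) :
    ∃ k : C(X, ℝ), {x | k x = 0} = ⋂ n, {x | f n x = 0} := by
  set t : ℕ → X → ℝ := fun n x => min |f n x| ((1 / 2) ^ n)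
  have ht_nonneg : ∀ n x, 0 ≤ t n x := fun n x => le_min (abs_nonneg _) (by positivity)
  have ht_le : ∀ n x, ‖t n x‖ ≤ (1 / 2 : ℝ) ^ n := fun n x => by
    rw [Real.norm_of_nonneg (ht_nonneg n x)]
    exact min_le_right _ _
  have hsum : Summable fun n : ℕ => (1 / 2 : ℝ) ^ n :=
    summable_geometric_of_lt_one (by norm_num) (by norm_num)
  refine ⟨⟨fun x => ∑' n, t n x, continuous_tsum (fun n => by fun_prop) hsum ht_le⟩, ?_⟩
  ext x
  have hsum_x : Summable fun n => t n x :=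
    .of_norm_bounded hsum fun n => ht_le n x
  rw [mem_iInter]
  change ∑' n, t n x = 0 ↔ ∀ n, f n x = 0
  rw [← hsum_x.hasSum_iff, hasSum_zero_iff_of_nonneg (ht_nonneg · x), funext_iff]
  refine forall_congr' fun n => ?_
  simp +contextual [t, min_eq_iff]

theorem ContinuousMap.dvd_of_zeroSet_subset {g b : C(X, ℝ)} (hg : IsOpen {x | g x = 0})
    (hgb : {x | g x = 0} ⊆ {x | b x = 0}) : g ∣ b := by
  -- `b / g` vanishes on the open set `Z(g)` because `b / 0 = 0`, so it is continuous there.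
  have hcont : Continuous fun x => b x / g x := by
    refine continuous_iff_continuousAt.2 fun x => ?_
    by_cases hx : g x = 0
    · refine (continuousAt_const (y := (0 : ℝ))).congr
        (Filter.eventuallyEq_of_mem (hg.mem_nhds hx) ?_)
      intro y (hy : g y = 0)
      simp [hy]
    · exact b.continuous.continuousAt.div g.continuous.continuousAt hx
  refine ⟨⟨_, hcont⟩, ext fun x => ?_⟩
  by_cases hx : g x = 0
  · have hbx : b x = 0 := hgb hx
    simp [hx, hbx]
  · simp [mul_div_cancel₀ _ hx]

end ZeroSets

def CountableStrongAnnihilatorCondition {R : Type*} [Semiring R] (I : Ideal R) : Prop :=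
  ∀ S : Set R, S.Countable → S ⊆ I → ∃ f ∈ I, {h : R | ∀ s ∈ S, h * s = 0} = {h : R | h * f = 0}

section Ideal

variable {X : Type*} [TopologicalSpace X] {I : Ideal C(X, ℝ)}

variable (I) in
def ZeroSetsClosedUnderCountableInter : Prop :=
  ∀ f : ℕ → C(X, ℝ), (∀ n, f n ∈ I) → ∃ g ∈ I, {x | g x = 0} = ⋂ n, {x | f n x = 0}

theorem ZeroSetsClosedUnderCountableInter.exists_zeroSet_eq_biInter
    (hI : ZeroSetsClosedUnderCountableInter I) {S : Set C(X, ℝ)} (hS : S.Countable)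
    (hSI : S ⊆ I) : ∃ g ∈ I, {x | g x = 0} = ⋂ s ∈ S, {x | s x = 0} := by
  rcases S.eq_empty_or_nonempty with rfl | hS_ne
  · exact ⟨0, I.zero_mem, by simp⟩
  obtain ⟨f, rfl⟩ := hS.exists_eq_range hS_ne
  obtain ⟨g, hgI, hg⟩ := hI f fun n => hSI (mem_range_self n)
  exact ⟨g, hgI, by rw [hg, biInter_range]⟩

theorem CountableStronglyAnnihilated.zeroSetsClosedUnderCountableInter
    (hI : CountableStronglyAnnihilated I) : ZeroSetsClosedUnderCountableInter I := by
  intro f hf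
  obtain ⟨k, hk⟩ := exists_zeroSet_eq_iInter f
  refine ⟨k, by_contra fun hkI => ?_, hk⟩
  obtain ⟨c, hc, hck⟩ := hI (range f) (countable_range f) (range_subset_iff.2 hf) k hkI
  refine hck ((mul_eq_zero_iff_support_subset c k).2 (hk ▸ subset_iInter fun n => ?_))
  exact (mul_eq_zero_iff_support_subset c (f n)).1 (hc _ (mem_range_self n))

theorem ZeroSetsClosedUnderCountableInter.countableStronglyAnnihilated
    [CompletelyRegularSpace X] (hP : ∀ f : C(X, ℝ), IsOpen {x | f x = 0})
    (hI : ZeroSetsClosedUnderCountableInter I) : CountableStronglyAnnihilated I := by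
  intro S hS hSI b hb
  obtain ⟨g, hgI, hg⟩ := hI.exists_zeroSet_eq_biInter hS hSI
  by_contra! hAnn
  have hgb : {c : C(X, ℝ) | support c ⊆ {x | g x = 0}} ⊆ {c | support c ⊆ {x | b x = 0}} := by
    rw [hg, ← setOf_forall_mul_eq_zero, ← setOf_mul_eq_zero]
    exact hAnn
  exact hb (I.mem_of_dvd (dvd_of_zeroSet_subset (hP g)
    ((setOf_support_subset_subset_iff (hP g) _).1 hgb)) hgI)

theorem ZeroSetsClosedUnderCountableInter.countableStrongAnnihilatorCondition
    (hI : ZeroSetsClosedUnderCountableInter I) : CountableStrongAnnihilatorCondition I := by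
  intro S hS hSI
  obtain ⟨g, hgI, hg⟩ := hI.exists_zeroSet_eq_biInter hS hSI
  exact ⟨g, hgI, by rw [setOf_forall_mul_eq_zero, setOf_mul_eq_zero, hg]⟩

theorem CountableStrongAnnihilatorCondition.zeroSetsClosedUnderCountableInter
    [CompletelyRegularSpace X] (hP : ∀ f : C(X, ℝ), IsOpen {x | f x = 0})
    (hI : CountableStrongAnnihilatorCondition I) : ZeroSetsClosedUnderCountableInter I := by
  intro f hf
  obtain ⟨g, hgI, hAnn⟩ := hI (range f) (countable_range f) (range_subset_iff.2 hf)
  obtain ⟨k, hk⟩ := exists_zeroSet_eq_iInter f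
  rw [setOf_forall_mul_eq_zero, setOf_mul_eq_zero, biInter_range] at hAnn
  exact ⟨g, hgI, ((setOf_support_subset_inj (hk ▸ hP k) (hP g)).1 hAnn).symm⟩

end Ideal

theorem stmt17 {X : Type*} [TopologicalSpace X] [CompletelyRegularSpace X]
    (hP : ∀ f : C(X, ℝ), IsOpen {x | f x = 0}) (I : Ideal C(X, ℝ)) :
    (CountableStronglyAnnihilated I ↔
      (∀ f : ℕ → C(X, ℝ), (∀ n, f n ∈ I) →
        ∃ g ∈ I, {x | g x = 0} = ⋂ n, {x | f n x = 0})) ∧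
    ((∀ f : ℕ → C(X, ℝ), (∀ n, f n ∈ I) →
        ∃ g ∈ I, {x | g x = 0} = ⋂ n, {x | f n x = 0}) ↔
      (∀ S : Set C(X, ℝ), S.Countable → S ⊆ I →
        ∃ f ∈ I, {h : C(X, ℝ) | ∀ s ∈ S, h * s = 0} = {h : C(X, ℝ) | h * f = 0})) :=
  ⟨⟨CountableStronglyAnnihilated.zeroSetsClosedUnderCountableInter,
      ZeroSetsClosedUnderCountableInter.countableStronglyAnnihilated hP⟩,
    ⟨ZeroSetsClosedUnderCountableInter.countableStrongAnnihilatorCondition,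
      CountableStrongAnnihilatorCondition.zeroSetsClosedUnderCountableInter hP⟩⟩
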